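/- arXiv:math/0406161 — 5 statements merged into one kernel-verified Lean document; each statement's English description precedes it below -/
import Mathlib

section
/- Let c be a rational number with c ≠ 1, and let A(c) = ℚ[x,y]/(x³ − xy², y³ − c·x²y) with x, y in degree 2. Then the images of xy, x², x² − y² form a ℚ-basis of the degree-4 part A⁴(c), and with respect to this basis and the orientation ω = (c−1)x⁴ ∈ A⁸(c), the Poincaré pairing on A⁴(c) is represented by the diagonal matrix diag(1/(c−1), 1/(c−1), 1). -/
open MvPolynomial

/-- The defining ideal of A(c) = ℚ[x,y]/(x³ − xy², y³ − c·x²y). -/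
noncomputable def AIdeal (c : ℚ) : Ideal (MvPolynomial (Fin 2) ℚ) :=
  Ideal.span {X 0 ^ 3 - X 0 * X 1 ^ 2, X 1 ^ 3 - C c * (X 0 ^ 2 * X 1)}

lemma aux_coeff_zero (c : ℚ) (m : Fin 2 →₀ ℕ) (hm : m 0 + m 1 ≤ 2)
    {p : MvPolynomial (Fin 2) ℚ} (hp : p ∈ AIdeal c) : coeff m p = 0 := by
  rw [AIdeal, Ideal.mem_span_pair] at hp
  obtain ⟨a, b, rfl⟩ := hp
  have key : ∀ (v : Fin 2 →₀ ℕ), v 0 + v 1 ≤ 2 →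
      coeff v (X 0 ^ 3 - X 0 * X 1 ^ 2 : MvPolynomial (Fin 2) ℚ) = 0 ∧
      coeff v (X 1 ^ 3 - C c * (X 0 ^ 2 * X 1) : MvPolynomial (Fin 2) ℚ) = 0 := by
    intro v hv
    have h1 : (X 0 * X 1 ^ 2 : MvPolynomial (Fin 2) ℚ)
        = monomial (Finsupp.single 0 1 + Finsupp.single 1 2) 1 := by
      rw [X_pow_eq_monomial, X, monomial_mul, mul_one]
    have h2 : (X 0 ^ 2 * X 1 : MvPolynomial (Fin 2) ℚ)
        = monomial (Finsupp.single 0 2 + Finsupp.single 1 1) 1 := by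
      rw [X_pow_eq_monomial, X, monomial_mul, mul_one]
    constructor <;>
    · simp only [h1, h2, coeff_sub, coeff_C_mul, coeff_X_pow, coeff_monomial]
      rw [if_neg, if_neg]
      · ring
      all_goals
        intro h
        have h0 := DFunLike.congr_fun h 0
        have h1' := DFunLike.congr_fun h 1
        simp [Finsupp.single_apply] at h0 h1'
        omega
  rw [coeff_add, coeff_mul, coeff_mul, Finset.sum_eq_zero, Finset.sum_eq_zero, add_zero]
  · intro x hx
    rw [Finset.HasAntidiagonal.mem_antidiagonal] at hx
    have hv : x.2 0 + x.2 1 ≤ 2 := by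
      have := DFunLike.congr_fun hx 0
      have := DFunLike.congr_fun hx 1
      simp [Finsupp.add_apply] at *
      omega
    rw [(key x.2 hv).2, mul_zero]
  · intro x hx
    rw [Finset.HasAntidiagonal.mem_antidiagonal] at hx
    have hv : x.2 0 + x.2 1 ≤ 2 := by
      have := DFunLike.congr_fun hx 0
      have := DFunLike.congr_fun hx 1
      simp [Finsupp.add_apply] at *
      omega
    rw [(key x.2 hv).1, mul_zero]


set_option maxHeartbeats 1000000 in
/-- In A(c), c ≠ 1, the classes of xy, x², x² − y² are linearly independent and span
the degree-4 part (the span of the classes of x², xy, y²), and with respect to the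
orientation ω = (c−1)x⁴ the Poincaré pairing is diag(1/(c−1), 1/(c−1), 1). -/
theorem stmt3 (c : ℚ) (hc : c ≠ 1) :
    letI mk := Ideal.Quotient.mk (AIdeal c)
    letI e1 := mk (X 0 * X 1)
    letI e2 := mk (X 0 ^ 2)
    letI e3 := mk (X 0 ^ 2 - X 1 ^ 2)
    letI ω := (c - 1) • mk (X 0 ^ 4)
    LinearIndependent ℚ ![e1, e2, e3] ∧
    Submodule.span ℚ {e1, e2, e3} =
      Submodule.span ℚ {mk (X 0 ^ 2), mk (X 0 * X 1), mk (X 1 ^ 2)} ∧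
    e1 * e1 = (1 / (c - 1)) • ω ∧ e1 * e2 = 0 ∧ e1 * e3 = 0 ∧
    e2 * e2 = (1 / (c - 1)) • ω ∧ e2 * e3 = 0 ∧ e3 * e3 = ω := by
  set mk := Ideal.Quotient.mk (AIdeal c) with hmkdef
  have hc1 : (c - 1 : ℚ) ≠ 0 := sub_ne_zero.mpr hc
  have hc1' : (1 - c : ℚ) ≠ 0 := sub_ne_zero.mpr (Ne.symm hc)
  have hsmul : ∀ (a : ℚ) (p : MvPolynomial (Fin 2) ℚ), a • mk p = mk (C a * p) := by
    intro a p
    rw [← smul_eq_C_mul, ← Ideal.Quotient.mkₐ_eq_mk ℚ (AIdeal c), map_smul]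
  have hCsub : ∀ a : ℚ, (C (a) : MvPolynomial (Fin 2) ℚ) = C a := fun _ => rfl
  have hX01 : (X 0 * X 1 : MvPolynomial (Fin 2) ℚ)
      = monomial (Finsupp.single 0 1 + Finsupp.single 1 1) 1 := by
    rw [X, X, monomial_mul, mul_one]
  have hωsmul : (1 / (c - 1)) • ((c - 1) • mk (X 0 ^ 4)) = mk (X 0 ^ 4) := by
    rw [smul_smul, one_div_mul_cancel hc1, one_smul]
  refine ⟨?_, ?_, ?_, ?_, ?_, ?_, ?_, ?_⟩
  · -- linear independence
    rw [Fintype.linearIndependent_iff]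
    intro g hg
    simp only [Fin.sum_univ_three, Matrix.cons_val_zero, Matrix.cons_val_one, Matrix.head_cons,
      Matrix.cons_val_two, Matrix.tail_cons] at hg
    rw [hsmul, hsmul, hsmul, ← map_add, ← map_add] at hg
    have hmem := Ideal.Quotient.eq_zero_iff_mem.mp hg
    have key : ∀ m : Fin 2 →₀ ℕ, m 0 + m 1 ≤ 2 →
        coeff m (C (g 0) * (X 0 * X 1) + C (g 1) * X 0 ^ 2 + C (g 2) * (X 0 ^ 2 - X 1 ^ 2)) = 0 :=
      fun m hm => aux_coeff_zero c m hm hmem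
    have c1 := key (Finsupp.single 0 1 + Finsupp.single 1 1)
      (by simp [Finsupp.add_apply, Finsupp.single_apply])
    have c2 := key (Finsupp.single 0 2) (by simp [Finsupp.add_apply, Finsupp.single_apply])
    have c3 := key (Finsupp.single 1 2) (by simp [Finsupp.add_apply, Finsupp.single_apply])
    simp only [coeff_add, coeff_C_mul, coeff_sub, coeff_X_pow, hX01, coeff_monomial] at c1 c2 c3
    simp [Finsupp.ext_iff, Fin.forall_fin_two, Finsupp.add_apply, Finsupp.single_apply]
      at c1 c2 c3
    intro i
    fin_cases i
    · exact c1
    · simpa [c3] using c2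
    · exact c3
  · -- spans
    apply le_antisymm <;> rw [Submodule.span_le] <;> intro z hz <;>
      rcases hz with rfl | rfl | hz <;> try rcases hz with rfl | rfl
    · exact Submodule.subset_span (Set.mem_insert_of_mem _ (Set.mem_insert _ _))
    · exact Submodule.subset_span (Set.mem_insert _ _)
    · rw [map_sub]
      exact sub_mem (Submodule.subset_span (Set.mem_insert _ _))
        (Submodule.subset_span (Set.mem_insert_of_mem _ (Set.mem_insert_of_mem _ rfl)))
    · exact Submodule.subset_span (Set.mem_insert_of_mem _ (Set.mem_insert _ _))
    · exact Submodule.subset_span (Set.mem_insert _ _)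
    · have h2 : mk (X 1 ^ 2) = mk (X 0 ^ 2) - mk (X 0 ^ 2 - X 1 ^ 2) := by
        rw [map_sub, sub_sub_cancel]
      rw [h2]
      exact sub_mem (Submodule.subset_span (Set.mem_insert_of_mem _ (Set.mem_insert _ _)))
        (Submodule.subset_span (Set.mem_insert_of_mem _ (Set.mem_insert_of_mem _ rfl)))
  · -- e1*e1
    rw [hωsmul]
    show mk (X 0 * X 1) * mk (X 0 * X 1) = _
    rw [← map_mul, Ideal.Quotient.mk_eq_mk_iff_sub_mem]
    exact Ideal.mem_span_pair.mpr ⟨-X 0, 0, by ring⟩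
  · -- e1*e2 = 0
    have h : (1 - c) • (mk (X 0 * X 1) * mk (X 0 ^ 2)) = 0 := by
      rw [← map_mul, hsmul, Ideal.Quotient.eq_zero_iff_mem]
      refine Ideal.mem_span_pair.mpr ⟨X 1, X 0, ?_⟩
      rw [map_sub, map_one]
      ring
    calc mk (X 0 * X 1) * mk (X 0 ^ 2)
        = (1 / (1 - c)) • ((1 - c) • (mk (X 0 * X 1) * mk (X 0 ^ 2))) := by
          rw [smul_smul, one_div_mul_cancel hc1', one_smul]
      _ = 0 := by rw [h, smul_zero]
  · -- e1*e3 = 0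
    show mk (X 0 * X 1) * mk (X 0 ^ 2 - X 1 ^ 2) = 0
    rw [← map_mul, Ideal.Quotient.eq_zero_iff_mem]
    exact Ideal.mem_span_pair.mpr ⟨X 1, 0, by ring⟩
  · -- e2*e2
    rw [hωsmul]
    show mk (X 0 ^ 2) * mk (X 0 ^ 2) = _
    rw [← map_mul]
    congr 1
    ring
  · -- e2*e3 = 0
    show mk (X 0 ^ 2) * mk (X 0 ^ 2 - X 1 ^ 2) = 0
    rw [← map_mul, Ideal.Quotient.eq_zero_iff_mem]
    exact Ideal.mem_span_pair.mpr ⟨X 0, 0, by ring⟩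
  · -- e3*e3 = ω
    rw [← map_mul, hsmul, Ideal.Quotient.mk_eq_mk_iff_sub_mem]
    refine Ideal.mem_span_pair.mpr ⟨(2 - C c) * X 0, X 1, ?_⟩
    rw [map_sub, map_one]
    ring
end

section
/- Let c ∈ ℚ, c ≠ 1, and consider the rational quadratic form with diagonal matrix diag(1/(c−1), 1/(c−1), 1). This form is equivalent over ℚ to a diagonal form with entries ±1 if and only if |c−1| is a sum of two rational squares. -/
open Matrix

/-- diagonal bilinear form on ℚ³ -/
def qB (s x y : Fin 3 → ℚ) : ℚ :=
  s 0 * x 0 * y 0 + s 1 * x 1 * y 1 + s 2 * x 2 * y 2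

lemma qB_expand (s u z : Fin 3 → ℚ) (a : ℚ) :
    qB s (u - a • z) (u - a • z) = qB s u u - 2 * a * qB s u z + a ^ 2 * qB s z z := by
  simp [qB, Pi.sub_apply, Pi.smul_apply, smul_eq_mul]; ring

lemma qB_symm (s x y : Fin 3 → ℚ) : qB s x y = qB s y x := by
  simp [qB]; ring

lemma refl_core (s u w z : Fin 3 → ℚ) (hz : qB s z z ≠ 0)
    (hwz : qB s z z = 2 * qB s w z) (huw : qB s u w = 0) :
    ∃ u' : Fin 3 → ℚ, qB s u' u' = qB s u u ∧ qB s u' (w - z) = 0 := by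
  refine ⟨u - (2 * qB s u z / qB s z z) • z, ?_, ?_⟩
  · rw [qB_expand]
    field_simp
    ring
  · have e1 : qB s (u - (2 * qB s u z / qB s z z) • z) (w - z)
        = qB s u w - qB s u z - (2 * qB s u z / qB s z z) * qB s z w
          + (2 * qB s u z / qB s z z) * qB s z z := by
      simp [qB, Pi.sub_apply, Pi.smul_apply, smul_eq_mul]; ring
    have hz' : qB s w z ≠ 0 := fun h0 => hz (by rw [hwz, h0, mul_zero])
    rw [e1, huw, qB_symm s z w, hwz]
    field_simp
    ring

lemma refl_exists (s u w e : Fin 3 → ℚ) (hww : qB s w w = 1) (hee : qB s e e = 1)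
    (huw : qB s u w = 0) :
    ∃ u' : Fin 3 → ℚ, qB s u' u' = qB s u u ∧ qB s u' e = 0 := by
  by_cases h : qB s (w - e) (w - e) = 0
  · -- use z = w + e
    have hz : qB s (w + e) (w + e) ≠ 0 := by
      have h4 : qB s (w - e) (w - e) + qB s (w + e) (w + e) = 2 * qB s w w + 2 * qB s e e := by
        simp [qB, Pi.sub_apply, Pi.add_apply]; ring
      rw [hww, hee, h] at h4
      intro h0; rw [h0] at h4; norm_num at h4
    have hwz : qB s (w + e) (w + e) = 2 * qB s w (w + e) := by
      have h1 : qB s (w + e) (w + e) = qB s w w + 2 * qB s w e + qB s e e := by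
        simp [qB, Pi.add_apply]; ring
      have h2 : qB s w (w + e) = qB s w w + qB s w e := by
        simp [qB, Pi.add_apply]; ring
      rw [h1, h2, hww, hee]; ring
    obtain ⟨u', hu1, hu2⟩ := refl_core s u w (w + e) hz hwz huw
    refine ⟨u', hu1, ?_⟩
    have he : w - (w + e) = -e := by ext i; simp
    rw [he] at hu2
    have hn : qB s u' (-e) = -qB s u' e := by simp [qB, Pi.neg_apply]; ring
    rw [hn] at hu2; linarith
  · have hwz : qB s (w - e) (w - e) = 2 * qB s w (w - e) := by
      have h1 : qB s (w - e) (w - e) = qB s w w - 2 * qB s w e + qB s e e := by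
        simp [qB, Pi.sub_apply]; ring
      have h2 : qB s w (w - e) = qB s w w - qB s w e := by
        simp [qB, Pi.sub_apply]; ring
      rw [h1, h2, hww, hee]; ring
    obtain ⟨u', hu1, hu2⟩ := refl_core s u w (w - e) h hwz huw
    refine ⟨u', hu1, ?_⟩
    have he : w - (w - e) = e := by ext i; simp
    rwa [he] at hu2

lemma final_arith (d p q ε : ℚ) (hd : d ≠ 0) (hε : ε = 1 ∨ ε = -1)
    (h : ε * (p ^ 2 + q ^ 2) = 1 / d) :
    ∃ a b : ℚ, |d| = a ^ 2 + b ^ 2 := by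
  refine ⟨d * p, d * q, ?_⟩
  have hd2 : (0:ℚ) < d ^ 2 := by positivity
  rcases hε with h1 | h1 <;> subst h1
  · have hpq : p ^ 2 + q ^ 2 = 1 / d := by linarith
    have hpos : 0 < p ^ 2 + q ^ 2 := by
      rcases (lt_or_eq_of_le (by positivity : (0:ℚ) ≤ p ^ 2 + q ^ 2)) with h' | h'
      · exact h'
      · exfalso
        have h1d : 1 / d = 0 := by rw [← hpq, ← h']
        exact hd ((div_eq_zero_iff.mp h1d).resolve_left one_ne_zero)
    have hdpos : 0 < d := by
      by_contra h'
      push_neg at h'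
      have hdneg : d < 0 := lt_of_le_of_ne h' hd
      have : 1 / d < 0 := div_neg_of_pos_of_neg one_pos hdneg
      linarith
    rw [abs_of_pos hdpos]
    have hdp : d * (p ^ 2 + q ^ 2) = 1 := by
      rw [hpq]; field_simp
    nlinarith [hdp]
  · have hpq : p ^ 2 + q ^ 2 = -(1 / d) := by linarith
    have hpos : 0 < p ^ 2 + q ^ 2 := by
      rcases (lt_or_eq_of_le (by positivity : (0:ℚ) ≤ p ^ 2 + q ^ 2)) with h' | h'
      · exact h'
      · exfalso
        have h1d : 1 / d = 0 := by rw [← neg_eq_zero, ← hpq, ← h']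
        exact hd ((div_eq_zero_iff.mp h1d).resolve_left one_ne_zero)
    have hdneg : d < 0 := by
      by_contra h'
      push_neg at h'
      have hdpos : 0 < d := lt_of_le_of_ne h' (Ne.symm hd)
      have : 0 < 1 / d := by positivity
      linarith
    rw [abs_of_neg hdneg]
    have hdp : d * (p ^ 2 + q ^ 2) = -1 := by
      rw [hpq]; field_simp
    nlinarith [hdp]

/-- For c ≠ 1, the rational quadratic form diag(1/(c−1), 1/(c−1), 1) is equivalent
over ℚ to a diagonal form with entries ±1 iff |c−1| is a sum of two rational squares. -/
theorem stmt5 (c : ℚ) (hc : c ≠ 1) :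
    (∃ P : Matrix (Fin 3) (Fin 3) ℚ, IsUnit P.det ∧ ∃ s : Fin 3 → ℚ,
        (∀ i, s i = 1 ∨ s i = -1) ∧
        Pᵀ * Matrix.diagonal ![1 / (c - 1), 1 / (c - 1), 1] * P = Matrix.diagonal s) ↔
    ∃ a b : ℚ, |c - 1| = a ^ 2 + b ^ 2 := by
  have hd : c - 1 ≠ 0 := sub_ne_zero.mpr hc
  set d : ℚ := c - 1 with hdd
  constructor
  · rintro ⟨P, hP, s, hs, hPAP⟩
    have hPdet : P.det ≠ 0 := by
      intro h0; rw [h0] at hP; exact (by simp : ¬ IsUnit (0:ℚ)) hP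
    have h1 : P * P⁻¹ = 1 := Matrix.mul_nonsing_inv P (isUnit_iff_ne_zero.mpr hPdet)
    have h2 : (P⁻¹)ᵀ * Pᵀ = 1 := by rw [← Matrix.transpose_mul, h1, Matrix.transpose_one]
    have hA : Matrix.diagonal ![1 / d, 1 / d, 1] =
        (P⁻¹)ᵀ * Matrix.diagonal s * P⁻¹ := by
      calc Matrix.diagonal ![1 / d, 1 / d, 1]
          = ((P⁻¹)ᵀ * Pᵀ) * Matrix.diagonal ![1 / d, 1 / d, 1] * (P * P⁻¹) := by
            rw [h2, h1, Matrix.one_mul, Matrix.mul_one]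
        _ = (P⁻¹)ᵀ * (Pᵀ * Matrix.diagonal ![1 / d, 1 / d, 1] * P) * P⁻¹ := by
            simp only [Matrix.mul_assoc]
        _ = (P⁻¹)ᵀ * Matrix.diagonal s * P⁻¹ := by rw [hPAP]
    set Q : Matrix (Fin 3) (Fin 3) ℚ := P⁻¹ with hQ
    have e00 : (Matrix.diagonal ![1 / d, 1 / d, 1] : Matrix (Fin 3) (Fin 3) ℚ) 0 0
        = (Qᵀ * Matrix.diagonal s * Q) 0 0 := by rw [← hA]
    have e22 : (Matrix.diagonal ![1 / d, 1 / d, 1] : Matrix (Fin 3) (Fin 3) ℚ) 2 2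
        = (Qᵀ * Matrix.diagonal s * Q) 2 2 := by rw [← hA]
    have e02 : (Matrix.diagonal ![1 / d, 1 / d, 1] : Matrix (Fin 3) (Fin 3) ℚ) 0 2
        = (Qᵀ * Matrix.diagonal s * Q) 0 2 := by rw [← hA]
    simp [Matrix.mul_apply, Matrix.diagonal_apply, Fin.sum_univ_three,
      Matrix.transpose_apply] at e00 e22 e02
    have huu : qB s (fun i => Q i 0) (fun i => Q i 0) = 1 / d := by
      simp only [qB]; rw [one_div]; linear_combination -e00
    have hww : qB s (fun i => Q i 2) (fun i => Q i 2) = 1 := by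
      simp only [qB]; linear_combination -e22
    have huw : qB s (fun i => Q i 0) (fun i => Q i 2) = 0 := by
      simp only [qB]; linear_combination -e02
    have hdet : s 0 * s 1 * s 2 * d ^ 2 = P.det ^ 2 := by
      have hD := congrArg Matrix.det hPAP
      rw [Matrix.det_mul, Matrix.det_mul, Matrix.det_transpose, Matrix.det_diagonal,
        Matrix.det_diagonal, Fin.prod_univ_three, Fin.prod_univ_three] at hD
      simp only [Matrix.cons_val_zero, Matrix.cons_val_one, Matrix.head_cons,
        Matrix.cons_val_two, Matrix.tail_cons] at hD
      have hd2 : d ^ 2 ≠ 0 := pow_ne_zero 2 hd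
      field_simp at hD
      nlinarith [hD]
    have hdetpos : 0 < s 0 * s 1 * s 2 := by
      have h1' : 0 < P.det ^ 2 := by positivity
      have h2' : (0:ℚ) < d ^ 2 := by positivity
      nlinarith [hdet]
    rcases hs 0 with h0 | h0 <;> rcases hs 1 with hh1 | hh1 <;> rcases hs 2 with hh2 | hh2
    -- (1,1,1)
    · obtain ⟨u', hu1, hu2⟩ := refl_exists s (fun i => Q i 0) (fun i => Q i 2) ![0,0,1]
        hww (by simp [qB, hh2]) huw
      have hk : u' 2 = 0 := by simp [qB, hh2] at hu2; linarith
      refine final_arith d (u' 0) (u' 1) 1 hd (Or.inl rfl) ?_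
      rw [← huu, ← hu1]
      simp only [qB, h0, hh1, hk]; ring
    -- (1,1,-1) bad
    · exfalso; rw [h0, hh1, hh2] at hdetpos; norm_num at hdetpos
    -- (1,-1,1) bad
    · exfalso; rw [h0, hh1, hh2] at hdetpos; norm_num at hdetpos
    -- (1,-1,-1)
    · obtain ⟨u', hu1, hu2⟩ := refl_exists s (fun i => Q i 0) (fun i => Q i 2) ![1,0,0]
        hww (by simp [qB, h0]) huw
      have hk : u' 0 = 0 := by simp [qB, h0] at hu2; linarith
      refine final_arith d (u' 1) (u' 2) (-1) hd (Or.inr rfl) ?_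
      rw [← huu, ← hu1]
      simp only [qB, hh1, hh2, hk]; ring
    -- (-1,1,1) bad
    · exfalso; rw [h0, hh1, hh2] at hdetpos; norm_num at hdetpos
    -- (-1,1,-1)
    · obtain ⟨u', hu1, hu2⟩ := refl_exists s (fun i => Q i 0) (fun i => Q i 2) ![0,1,0]
        hww (by simp [qB, hh1]) huw
      have hk : u' 1 = 0 := by simp [qB, hh1] at hu2; linarith
      refine final_arith d (u' 0) (u' 2) (-1) hd (Or.inr rfl) ?_
      rw [← huu, ← hu1]
      simp only [qB, h0, hh2, hk]; ring
    -- (-1,-1,1)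
    · obtain ⟨u', hu1, hu2⟩ := refl_exists s (fun i => Q i 0) (fun i => Q i 2) ![0,0,1]
        hww (by simp [qB, hh2]) huw
      have hk : u' 2 = 0 := by simp [qB, hh2] at hu2; linarith
      refine final_arith d (u' 0) (u' 1) (-1) hd (Or.inr rfl) ?_
      rw [← huu, ← hu1]
      simp only [qB, h0, hh1, hk]; ring
    -- (-1,-1,-1) bad
    · exfalso; rw [h0, hh1, hh2] at hdetpos; norm_num at hdetpos
  · rintro ⟨a, b, hab⟩
    rcases lt_trichotomy d 0 with hneg | hzero | hpos
    · -- d < 0 : ε = -1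
      have hab' : a ^ 2 + b ^ 2 = -d := by rw [← hab, abs_of_neg hneg]
      refine ⟨(![![a, -b, 0], ![b, a, 0], ![0, 0, 1]] : Matrix (Fin 3) (Fin 3) ℚ), ?_,
        ![-1, -1, 1], ?_, ?_⟩
      · have hdet : Matrix.det (![![a, -b, 0], ![b, a, 0], ![0, 0, 1]] :
            Matrix (Fin 3) (Fin 3) ℚ) = a ^ 2 + b ^ 2 := by
          exact (Matrix.det_fin_three _).trans (by simp; ring)
        rw [hdet, hab']
        exact isUnit_iff_ne_zero.mpr (by intro h0; apply hd; linarith)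
      · intro i; fin_cases i <;> simp
      · ext i j
        change ((Matrix.of ![![a, -b, 0], ![b, a, 0], ![0, 0, 1]])ᵀ * _ * Matrix.of ![![a, -b, 0], ![b, a, 0], ![0, 0, 1]] : Matrix (Fin 3) (Fin 3) ℚ) i j = _
        fin_cases i <;> fin_cases j <;>
          simp [Matrix.mul_apply, Fin.sum_univ_three, Matrix.diagonal_apply] <;>
          field_simp <;>
          first
          | linear_combination hab'
          | linear_combination -hab'
          | ring
    · exact absurd hzero hd
    · -- d > 0 : ε = 1
      have hab' : a ^ 2 + b ^ 2 = d := by rw [← hab, abs_of_pos hpos]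
      refine ⟨(![![a, -b, 0], ![b, a, 0], ![0, 0, 1]] : Matrix (Fin 3) (Fin 3) ℚ), ?_,
        ![1, 1, 1], ?_, ?_⟩
      · have hdet : Matrix.det (![![a, -b, 0], ![b, a, 0], ![0, 0, 1]] :
            Matrix (Fin 3) (Fin 3) ℚ) = a ^ 2 + b ^ 2 := by
          exact (Matrix.det_fin_three _).trans (by simp; ring)
        rw [hdet, hab']
        exact isUnit_iff_ne_zero.mpr hd
      · intro i; fin_cases i <;> simp
      · ext i j
        change ((Matrix.of ![![a, -b, 0], ![b, a, 0], ![0, 0, 1]])ᵀ * _ * Matrix.of ![![a, -b, 0], ![b, a, 0], ![0, 0, 1]] : Matrix (Fin 3) (Fin 3) ℚ) i j = _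
        fin_cases i <;> fin_cases j <;>
          simp [Matrix.mul_apply, Fin.sum_univ_three, Matrix.diagonal_apply] <;>
          field_simp <;>
          first
          | linear_combination hab'
          | linear_combination -hab'
          | ring
end

section
/- The four homogeneous polynomials x₁²−x₄², x₂²−x₄², x₃²−x₄², and Σ_{i<j} x_i x_j − c x₄² in ℚ[x₁,x₂,x₃,x₄] form a regular sequence (equivalently, their common complex zero set is {0}) if and only if c ∉ {−2, 0, 6}. -/
/-!
Each of the first three equations says `xᵢ = ±x₄`, and substituting the signs turns the fourth
into `(e - c) x₄² = 0` with `e ∈ {-2, 0, 6}`. So for `c ∉ {-2, 0, 6}` everything vanishes, while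
for `c = 6, 0, -2` the points `(1, 1, 1, 1)`, `(1, 1, -1, 1)`, `(1, -1, -1, 1)` are nonzero zeros.
-/

section SignedSquares

variable {R : Type*} [CommRing R] [NoZeroDivisors R]

theorem exists_pairwise_sum_eq_mul_sq {x₁ x₂ x₃ x₄ : R} (h₁ : x₁ ^ 2 = x₄ ^ 2)
    (h₂ : x₂ ^ 2 = x₄ ^ 2) (h₃ : x₃ ^ 2 = x₄ ^ 2) :
    ∃ e ∈ ({-2, 0, 6} : Set R),
      x₁ * x₂ + x₁ * x₃ + x₁ * x₄ + x₂ * x₃ + x₂ * x₄ + x₃ * x₄ = e * x₄ ^ 2 := by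
  -- `e` is `6, 0, -2, 0` according as `0, 1, 2, 3` of the signs `xᵢ / x₄` are negative.
  rcases sq_eq_sq_iff_eq_or_eq_neg.mp h₁ with rfl | rfl <;>
  rcases sq_eq_sq_iff_eq_or_eq_neg.mp h₂ with rfl | rfl <;>
  rcases sq_eq_sq_iff_eq_or_eq_neg.mp h₃ with rfl | rfl <;>
  first
  | exact ⟨6, by simp, by ring1⟩
  | exact ⟨0, by simp, by ring1⟩
  | exact ⟨-2, by simp, by ring1⟩

theorem eq_zero_of_sq_eq_of_pairwise_sum_eq {c x₁ x₂ x₃ x₄ : R} (hc : c ∉ ({-2, 0, 6} : Set R))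
    (h₁ : x₁ ^ 2 = x₄ ^ 2) (h₂ : x₂ ^ 2 = x₄ ^ 2) (h₃ : x₃ ^ 2 = x₄ ^ 2)
    (h : x₁ * x₂ + x₁ * x₃ + x₁ * x₄ + x₂ * x₃ + x₂ * x₄ + x₃ * x₄ = c * x₄ ^ 2) :
    x₁ = 0 ∧ x₂ = 0 ∧ x₃ = 0 ∧ x₄ = 0 := by
  obtain ⟨e, he, hsum⟩ := exists_pairwise_sum_eq_mul_sq h₁ h₂ h₃
  have hec : e - c ≠ 0 := sub_ne_zero.mpr fun hce => hc (hce ▸ he)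
  have hx₄ : x₄ = 0 := by
    have : (e - c) * x₄ ^ 2 = 0 := by linear_combination hsum.symm.trans h
    exact pow_eq_zero_iff two_ne_zero |>.mp ((mul_eq_zero.mp this).resolve_left hec)
  subst hx₄
  simp_all

end SignedSquares

/-- The common complex zero set of x₁²−x₄², x₂²−x₄², x₃²−x₄² and
Σ_{i<j} xᵢxⱼ − c·x₄² is {0} iff c ∉ {−2, 0, 6}. -/
theorem stmt9 (c : ℚ) :
    (∀ x₁ x₂ x₃ x₄ : ℂ, x₁ ^ 2 - x₄ ^ 2 = 0 → x₂ ^ 2 - x₄ ^ 2 = 0 →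
        x₃ ^ 2 - x₄ ^ 2 = 0 →
        x₁ * x₂ + x₁ * x₃ + x₁ * x₄ + x₂ * x₃ + x₂ * x₄ + x₃ * x₄ - (c : ℂ) * x₄ ^ 2 = 0 →
        x₁ = 0 ∧ x₂ = 0 ∧ x₃ = 0 ∧ x₄ = 0) ↔
      c ≠ -2 ∧ c ≠ 0 ∧ c ≠ 6 := by
  constructor
  · intro h
    refine ⟨?_, ?_, ?_⟩ <;> rintro rfl
    · simpa using (h 1 (-1) (-1) 1 (by ring) (by ring) (by ring) (by push_cast; ring)).1
    · simpa using (h 1 1 (-1) 1 (by ring) (by ring) (by ring) (by push_cast; ring)).1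
    · simpa using (h 1 1 1 1 (by ring) (by ring) (by ring) (by push_cast; ring)).1
  · intro hc x₁ x₂ x₃ x₄ e₁ e₂ e₃ e₄
    have hcℂ : (c : ℂ) ∉ ({-2, 0, 6} : Set ℂ) := by
      simp only [Set.mem_insert_iff, Set.mem_singleton_iff, not_or]
      exact_mod_cast hc
    exact eq_zero_of_sq_eq_of_pairwise_sum_eq hcℂ (sub_eq_zero.mp e₁) (sub_eq_zero.mp e₂)
      (sub_eq_zero.mp e₃) (sub_eq_zero.mp e₄)
end

section
/- For rational c with c ∉ {−2, 0, 4, 6}, the symmetric 6×6 block matrix B₁(c) = diag(1,1,1) ⊕ C, where C is the 3×3 matrix with diagonal entries a = c(c−4)/((6−c)(c+2)) and off-diagonal entries b = 2c/((6−c)(c+2)), is congruent over ℚ to the diagonal matrix diag(1, 1, 1, c(c−4)/((6−c)(c+2)), −2c/(c+2), −2(c−4)/(c+2)). -/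
open Matrix

/-- The 6×6 matrix B₁(c) = diag(1,1,1) ⊕ C, where C has constant diagonal
a = c(c−4)/((6−c)(c+2)) and constant off-diagonal b = 2c/((6−c)(c+2)). -/
noncomputable def B1 (c : ℚ) : Matrix (Fin 6) (Fin 6) ℚ :=
  Matrix.of fun i j =>
    if (i : ℕ) < 3 then (if i = j then 1 else 0)
    else if (j : ℕ) < 3 then 0
    else if i = j then c * (c - 4) / ((6 - c) * (c + 2))
    else 2 * c / ((6 - c) * (c + 2))

private lemma stmt10_v2 {α : Type*} (a b c d e f : α) : ![a,b,c,d,e,f] 2 = c := rfl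
private lemma stmt10_v3 {α : Type*} (a b c d e f : α) : ![a,b,c,d,e,f] 3 = d := rfl
private lemma stmt10_v4 {α : Type*} (a b c d e f : α) : ![a,b,c,d,e,f] 4 = e := rfl
private lemma stmt10_v5 {α : Type*} (a b c d e f : α) : ![a,b,c,d,e,f] 5 = f := rfl
private lemma stmt10_w2 {α : Type*} (a b c d e f : α) (h : 2 < 6) : ![a,b,c,d,e,f] ⟨2,h⟩ = c := rfl
private lemma stmt10_w3 {α : Type*} (a b c d e f : α) (h : 3 < 6) : ![a,b,c,d,e,f] ⟨3,h⟩ = d := rfl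
private lemma stmt10_w4 {α : Type*} (a b c d e f : α) (h : 4 < 6) : ![a,b,c,d,e,f] ⟨4,h⟩ = e := rfl
private lemma stmt10_w5 {α : Type*} (a b c d e f : α) (h : 5 < 6) : ![a,b,c,d,e,f] ⟨5,h⟩ = f := rfl

private lemma stmt10_q0 : ((0:Fin 6):ℕ) = 0 := rfl
private lemma stmt10_q1 : ((1:Fin 6):ℕ) = 1 := rfl
private lemma stmt10_q2 : ((2:Fin 6):ℕ) = 2 := rfl
private lemma stmt10_q3 : ((3:Fin 6):ℕ) = 3 := rfl
private lemma stmt10_q4 : ((4:Fin 6):ℕ) = 4 := rfl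
private lemma stmt10_q5 : ((5:Fin 6):ℕ) = 5 := rfl

private lemma stmt10_c2_2 {α : Type*} (a : α) (u : Fin 2 → α) : Matrix.vecCons a u (2 : Fin 3) = u (1 : Fin 2) := rfl
private lemma stmt10_c3_2 {α : Type*} (a : α) (u : Fin 3 → α) : Matrix.vecCons a u (2 : Fin 4) = u (1 : Fin 3) := rfl
private lemma stmt10_c3_3 {α : Type*} (a : α) (u : Fin 3 → α) : Matrix.vecCons a u (3 : Fin 4) = u (2 : Fin 3) := rfl
private lemma stmt10_c4_2 {α : Type*} (a : α) (u : Fin 4 → α) : Matrix.vecCons a u (2 : Fin 5) = u (1 : Fin 4) := rfl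
private lemma stmt10_c4_3 {α : Type*} (a : α) (u : Fin 4 → α) : Matrix.vecCons a u (3 : Fin 5) = u (2 : Fin 4) := rfl
private lemma stmt10_c4_4 {α : Type*} (a : α) (u : Fin 4 → α) : Matrix.vecCons a u (4 : Fin 5) = u (3 : Fin 4) := rfl
private lemma stmt10_c5_2 {α : Type*} (a : α) (u : Fin 5 → α) : Matrix.vecCons a u (2 : Fin 6) = u (1 : Fin 5) := rfl
private lemma stmt10_c5_3 {α : Type*} (a : α) (u : Fin 5 → α) : Matrix.vecCons a u (3 : Fin 6) = u (2 : Fin 5) := rfl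
private lemma stmt10_c5_4 {α : Type*} (a : α) (u : Fin 5 → α) : Matrix.vecCons a u (4 : Fin 6) = u (3 : Fin 5) := rfl
private lemma stmt10_c5_5 {α : Type*} (a : α) (u : Fin 5 → α) : Matrix.vecCons a u (5 : Fin 6) = u (4 : Fin 5) := rfl

set_option maxHeartbeats 2000000 in
/-- For c ∉ {−2,0,4,6}, B₁(c) is congruent over ℚ to
diag(1, 1, 1, c(c−4)/((6−c)(c+2)), −2c/(c+2), −2(c−4)/(c+2)). -/
theorem stmt10 (c : ℚ) (h2 : c ≠ -2) (h0 : c ≠ 0) (h4 : c ≠ 4) (h6 : c ≠ 6) :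
    ∃ P : Matrix (Fin 6) (Fin 6) ℚ, IsUnit P.det ∧
      Pᵀ * B1 c * P =
        Matrix.diagonal ![1, 1, 1, c * (c - 4) / ((6 - c) * (c + 2)),
          -2 * c / (c + 2), -2 * (c - 4) / (c + 2)] := by
  have hp2 : c + 2 ≠ 0 := fun h => h2 (by linarith)
  have hm4 : c - 4 ≠ 0 := fun h => h4 (by linarith)
  have hm6 : (6 : ℚ) - c ≠ 0 := fun h => h6 (by linarith)
  by_cases hc : c = 2
  · subst hc
    refine ⟨!![1,0,0,0,0,0; 0,1,0,0,0,0; 0,0,1,0,0,0;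
        0,0,0,1,0,2; 0,0,0,0,1,1; 0,0,0,0,-1,1], ?_, ?_⟩
    · apply Matrix.isUnit_det_of_right_inverse
        (B := !![1,0,0,0,0,0; 0,1,0,0,0,0; 0,0,1,0,0,0;
          0,0,0,1,-1,-1; 0,0,0,0,(1:ℚ)/2,-1/2; 0,0,0,0,1/2,1/2])
      ext i j
      fin_cases i <;> fin_cases j <;>
        norm_num [Matrix.mul_apply, Fin.sum_univ_succ, Matrix.one_apply, stmt10_v2, stmt10_v3, stmt10_v4, stmt10_v5, stmt10_w2, stmt10_w3, stmt10_w4, stmt10_w5, Fin.ext_iff, stmt10_q0, stmt10_q1, stmt10_q2, stmt10_q3, stmt10_q4, stmt10_q5, stmt10_c2_2, stmt10_c3_2, stmt10_c3_3, stmt10_c4_2, stmt10_c4_3, stmt10_c4_4, stmt10_c5_2, stmt10_c5_3, stmt10_c5_4, stmt10_c5_5, Matrix.cons_val_zero', Matrix.cons_val_succ']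
    · ext i j
      fin_cases i <;> fin_cases j <;>
        norm_num [B1, Matrix.mul_apply, Fin.sum_univ_succ, Matrix.diagonal, stmt10_v2, stmt10_v3, stmt10_v4, stmt10_v5, stmt10_w2, stmt10_w3, stmt10_w4, stmt10_w5, Fin.ext_iff, stmt10_q0, stmt10_q1, stmt10_q2, stmt10_q3, stmt10_q4, stmt10_q5, stmt10_c2_2, stmt10_c3_2, stmt10_c3_3, stmt10_c4_2, stmt10_c4_3, stmt10_c4_4, stmt10_c5_2, stmt10_c5_3, stmt10_c5_4, stmt10_c5_5, Matrix.cons_val_zero', Matrix.cons_val_succ', -Fin.val_eq_zero_iff]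
  · have hm2 : c - 2 ≠ 0 := fun h => hc (by linarith)
    refine ⟨!![1,0,0,0,0,0; 0,1,0,0,0,0; 0,0,1,0,0,0;
        0,0,0,1,-4/(c-2),8/(c*(c-2));
        0,0,0,0,(c-6)/(c-2),-(c-4)*(c+2)/(c*(c-2));
        0,0,0,0,1,(c-4)/c], ?_, ?_⟩
    · apply Matrix.isUnit_det_of_right_inverse
        (B := !![1,0,0,0,0,0; 0,1,0,0,0,0; 0,0,1,0,0,0;
          0,0,0,1,2/(c-4),2/(c-4);
          0,0,0,0,1/2,(c+2)/(2*(c-2));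
          0,0,0,0,-c/(2*(c-4)),c*(c-6)/(2*(c-4)*(c-2))])
      ext i j
      fin_cases i <;> fin_cases j <;>
        simp [Matrix.mul_apply, Fin.sum_univ_succ, Matrix.one_apply, stmt10_v2, stmt10_v3, stmt10_v4, stmt10_v5, stmt10_w2, stmt10_w3, stmt10_w4, stmt10_w5, Fin.ext_iff, stmt10_q0, stmt10_q1, stmt10_q2, stmt10_q3, stmt10_q4, stmt10_q5, stmt10_c2_2, stmt10_c3_2, stmt10_c3_3, stmt10_c4_2, stmt10_c4_3, stmt10_c4_4, stmt10_c5_2, stmt10_c5_3, stmt10_c5_4, stmt10_c5_5, Matrix.cons_val_zero', Matrix.cons_val_succ'] <;>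
        (try field_simp) <;> (try ring)
    · ext i j
      fin_cases i <;> fin_cases j <;>
        simp [B1, Matrix.mul_apply, Fin.sum_univ_succ, Matrix.diagonal, stmt10_v2, stmt10_v3, stmt10_v4, stmt10_v5, stmt10_w2, stmt10_w3, stmt10_w4, stmt10_w5, Fin.ext_iff, stmt10_q0, stmt10_q1, stmt10_q2, stmt10_q3, stmt10_q4, stmt10_q5, stmt10_c2_2, stmt10_c3_2, stmt10_c3_3, stmt10_c4_2, stmt10_c4_3, stmt10_c4_4, stmt10_c5_2, stmt10_c5_3, stmt10_c5_4, stmt10_c5_5, Matrix.cons_val_zero', Matrix.cons_val_succ', -Fin.val_eq_zero_iff] <;>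
        (try field_simp) <;> (try ring)
end

section
/- The signature of the real diagonal matrix diag(1, 1, 1, c(c−4)/((6−c)(c+2)), −2c/(c+2), −2(c−4)/(c+2)), for real c ∉ {−2, 0, 4, 6}, lies in the set {0, ±2, ±6}; in particular it never equals ±4. -/
open Classical

noncomputable def sigDiag {n : ℕ} (d : Fin n → ℝ) : ℤ :=
  ((Finset.univ.filter fun i => 0 < d i).card : ℤ) -
    ((Finset.univ.filter fun i => d i < 0).card : ℤ)

set_option maxRecDepth 8000 in
set_option maxHeartbeats 1000000 in
lemma sigval (A B C : ℝ) :
    sigDiag ![1, 1, 1, A, B, C] =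
      (3 + (if 0 < A then (1:ℤ) else 0) + (if 0 < B then (1:ℤ) else 0) + (if 0 < C then (1:ℤ) else 0))
      - ((if A < 0 then (1:ℤ) else 0) + (if B < 0 then (1:ℤ) else 0) + (if C < 0 then (1:ℤ) else 0)) := by
  unfold sigDiag
  rw [Finset.card_filter, Finset.card_filter, Fin.sum_univ_six, Fin.sum_univ_six]
  by_cases h1 : 0 < A <;> by_cases h2 : A < 0 <;> by_cases h3 : 0 < B <;> by_cases h4 : B < 0 <;>
    by_cases h5 : 0 < C <;> by_cases h6 : C < 0 <;> simp [h1, h2, h3, h4, h5, h6] <;> norm_num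

lemma sigpnn (A B C : ℝ) (hA : 0 < A) (hB : B < 0) (hC : C < 0) :
    sigDiag ![1, 1, 1, A, B, C] = 2 := by
  rw [sigval, if_pos hA, if_neg (not_lt.2 hB.le), if_neg (not_lt.2 hC.le),
    if_neg (not_lt.2 hA.le), if_pos hB, if_pos hC]
  norm_num

lemma signnp (A B C : ℝ) (hA : A < 0) (hB : B < 0) (hC : 0 < C) :
    sigDiag ![1, 1, 1, A, B, C] = 2 := by
  rw [sigval, if_neg (not_lt.2 hA.le), if_neg (not_lt.2 hB.le), if_pos hC,
    if_pos hA, if_pos hB, if_neg (not_lt.2 hC.le)]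
  norm_num

lemma signnn (A B C : ℝ) (hA : A < 0) (hB : B < 0) (hC : C < 0) :
    sigDiag ![1, 1, 1, A, B, C] = 0 := by
  rw [sigval, if_neg (not_lt.2 hA.le), if_neg (not_lt.2 hB.le), if_neg (not_lt.2 hC.le),
    if_pos hA, if_pos hB, if_pos hC]
  norm_num

lemma sigppp (A B C : ℝ) (hA : 0 < A) (hB : 0 < B) (hC : 0 < C) :
    sigDiag ![1, 1, 1, A, B, C] = 6 := by
  rw [sigval, if_pos hA, if_pos hB, if_pos hC,
    if_neg (not_lt.2 hA.le), if_neg (not_lt.2 hB.le), if_neg (not_lt.2 hC.le)]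
  norm_num

/-- For real c ∉ {−2,0,4,6}, the signature of
diag(1, 1, 1, c(c−4)/((6−c)(c+2)), −2c/(c+2), −2(c−4)/(c+2)) lies in {0,±2,±6};
in particular it is never ±4. -/
theorem stmt12 (c : ℝ) (h2 : c ≠ -2) (h0 : c ≠ 0) (h4 : c ≠ 4) (h6 : c ≠ 6) :
    sigDiag ![1, 1, 1, c * (c - 4) / ((6 - c) * (c + 2)),
        -2 * c / (c + 2), -2 * (c - 4) / (c + 2)] ∈ ({0, 2, -2, 6, -6} : Set ℤ) ∧
    sigDiag ![1, 1, 1, c * (c - 4) / ((6 - c) * (c + 2)),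
        -2 * c / (c + 2), -2 * (c - 4) / (c + 2)] ≠ 4 ∧
    sigDiag ![1, 1, 1, c * (c - 4) / ((6 - c) * (c + 2)),
        -2 * c / (c + 2), -2 * (c - 4) / (c + 2)] ≠ -4 := by
  have key : sigDiag ![1, 1, 1, c * (c - 4) / ((6 - c) * (c + 2)),
      -2 * c / (c + 2), -2 * (c - 4) / (c + 2)] = 0 ∨
      sigDiag ![1, 1, 1, c * (c - 4) / ((6 - c) * (c + 2)),
      -2 * c / (c + 2), -2 * (c - 4) / (c + 2)] = 2 ∨
      sigDiag ![1, 1, 1, c * (c - 4) / ((6 - c) * (c + 2)),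
      -2 * c / (c + 2), -2 * (c - 4) / (c + 2)] = 6 := by
    rcases lt_trichotomy c (-2) with hc | hc | hc
    · exact Or.inl (signnn _ _ _
        (div_neg_of_pos_of_neg (by nlinarith) (by nlinarith))
        (div_neg_of_pos_of_neg (by linarith) (by linarith))
        (div_neg_of_pos_of_neg (by linarith) (by linarith)))
    · exact absurd hc h2
    · rcases lt_trichotomy c 0 with hc0 | hc0 | hc0
      · exact Or.inr (Or.inr (sigppp _ _ _
          (div_pos (by nlinarith) (by nlinarith))
          (div_pos (by linarith) (by linarith))
          (div_pos (by linarith) (by linarith))))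
      · exact absurd hc0 h0
      · rcases lt_trichotomy c 4 with hc4 | hc4 | hc4
        · exact Or.inr (Or.inl (signnp _ _ _
            (div_neg_of_neg_of_pos (by nlinarith) (by nlinarith))
            (div_neg_of_neg_of_pos (by linarith) (by linarith))
            (div_pos (by linarith) (by linarith))))
        · exact absurd hc4 h4
        · rcases lt_trichotomy c 6 with hc6 | hc6 | hc6
          · exact Or.inr (Or.inl (sigpnn _ _ _
              (div_pos (by nlinarith) (by nlinarith))
              (div_neg_of_neg_of_pos (by linarith) (by linarith))
              (div_neg_of_neg_of_pos (by linarith) (by linarith))))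
          · exact absurd hc6 h6
          · exact Or.inl (signnn _ _ _
              (div_neg_of_pos_of_neg (by nlinarith) (by nlinarith))
              (div_neg_of_neg_of_pos (by linarith) (by linarith))
              (div_neg_of_neg_of_pos (by linarith) (by linarith)))
  rcases key with h | h | h <;> rw [h] <;> refine ⟨by simp, by decide, by decide⟩
end
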